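/- Suppose (Y_j) are positive reals with ∑_{j=1}^n 1/Y_j ≥ a n^{1/2} for all n and some a > 0, where each Y_j ≤ c j^{1/2} for a constant c > 0. Then ∑_{j=1}^n 1/Y_j^2 ≥ (a^2/4) log n for all n ≥ 2. -/

import Mathlib

/-!
Put `w j = 1 / √j`. Since the partial sums of `x` dominate those of `a (√j - √(j-1))` and `w`
is decreasing, summation by parts gives `∑ w j x j ≥ a ∑ (√j - √(j-1)) / √j ≥ (a/2) H_n`.
Cauchy–Schwarz gives `(∑ w j x j)² ≤ (∑ x j²) H_n`, hence `∑ x j² ≥ (a²/4) H_n ≥ (a²/4) log n`.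
-/

open Finset Real

section SummationByParts

variable {w b d x : ℕ → ℝ}

theorem mul_sum_Icc_le_sum_Icc_mul (hw : AntitoneOn w (Set.Ici 1))
    (hd : ∀ k, 0 ≤ ∑ j ∈ Icc 1 k, d j) {n : ℕ} (hn : 1 ≤ n) :
    w n * ∑ j ∈ Icc 1 n, d j ≤ ∑ j ∈ Icc 1 n, w j * d j := by
  induction n, hn using Nat.le_induction with
  | base => simp
  | succ n hn ih =>
    rw [sum_Icc_succ_top (by omega), sum_Icc_succ_top (by omega), mul_add]
    have hwn : w (n + 1) ≤ w n := hw (Set.mem_Ici.2 hn) (Set.mem_Ici.2 (by omega)) (by omega)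
    have := mul_le_mul_of_nonneg_right hwn (hd n)
    linarith

theorem sum_Icc_mul_le_sum_Icc_mul_of_partial_sums_le (hw : AntitoneOn w (Set.Ici 1))
    (hw₀ : ∀ j, 0 ≤ w j) (h : ∀ k, ∑ j ∈ Icc 1 k, b j ≤ ∑ j ∈ Icc 1 k, x j) (n : ℕ) :
    ∑ j ∈ Icc 1 n, w j * b j ≤ ∑ j ∈ Icc 1 n, w j * x j := by
  rcases Nat.eq_zero_or_pos n with rfl | hn
  · simp
  have hd : ∀ k, 0 ≤ ∑ j ∈ Icc 1 k, (x j - b j) := fun k ↦ by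
    rw [sum_sub_distrib]; linarith [h k]
  have h₀ : 0 ≤ ∑ j ∈ Icc 1 n, w j * (x j - b j) :=
    (mul_nonneg (hw₀ n) (hd n)).trans (mul_sum_Icc_le_sum_Icc_mul hw hd hn)
  simpa only [mul_sub, sum_sub_distrib, sub_nonneg] using h₀

end SummationByParts

theorem sum_Icc_sqrt_sub_sqrt_sub_one (k : ℕ) :
    ∑ j ∈ Icc 1 k, (√(j : ℝ) - √((j : ℝ) - 1)) = √(k : ℝ) := by
  induction k with
  | zero => simp
  | succ k ih => rw [sum_Icc_succ_top (by omega), ih]; push_cast; simp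

theorem inv_two_mul_sqrt_le_sqrt_sub_sqrt_sub_one {t : ℝ} (ht : 1 ≤ t) :
    (2 * √t)⁻¹ ≤ √t - √(t - 1) := by
  have hr : 0 < √t := sqrt_pos.2 (by linarith)
  have hsr : √(t - 1) ≤ √t := sqrt_le_sqrt (by linarith)
  have hs2 : √(t - 1) ^ 2 = t - 1 := sq_sqrt (by linarith)
  have hr2 : √t ^ 2 = t := sq_sqrt (by linarith)
  rw [inv_le_iff_one_le_mul₀' (by positivity)]
  nlinarith

theorem cast_harmonic_eq_sum_Icc_inv (n : ℕ) :
    (harmonic n : ℝ) = ∑ j ∈ Icc 1 n, ((j : ℝ))⁻¹ := by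
  simp [harmonic_eq_sum_Icc]

theorem mul_harmonic_le_sum_Icc_inv_sqrt_mul {x : ℕ → ℝ} {a : ℝ} (ha : 0 ≤ a)
    (hS : ∀ k : ℕ, a * √(k : ℝ) ≤ ∑ j ∈ Icc 1 k, x j) (n : ℕ) :
    a / 2 * (harmonic n : ℝ) ≤ ∑ j ∈ Icc 1 n, (√(j : ℝ))⁻¹ * x j := by
  have hw : AntitoneOn (fun j : ℕ ↦ (√(j : ℝ))⁻¹) (Set.Ici 1) := fun i hi j _ hij ↦ by
    have : (1 : ℝ) ≤ i := by exact_mod_cast hi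
    have : (i : ℝ) ≤ j := by exact_mod_cast hij
    dsimp only
    gcongr
  have hb : ∀ k : ℕ, ∑ j ∈ Icc 1 k, a * (√(j : ℝ) - √((j : ℝ) - 1)) ≤ ∑ j ∈ Icc 1 k, x j := by
    intro k; rw [← mul_sum, sum_Icc_sqrt_sub_sqrt_sub_one]; exact hS k
  refine le_trans ?_ (sum_Icc_mul_le_sum_Icc_mul_of_partial_sums_le hw (fun _ ↦ by positivity) hb n)
  rw [cast_harmonic_eq_sum_Icc_inv, mul_sum]
  refine sum_le_sum fun j hj ↦ ?_
  have hj : (1 : ℝ) ≤ j := by exact_mod_cast (mem_Icc.1 hj).1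
  have hr : 0 < √(j : ℝ) := sqrt_pos.2 (by linarith)
  calc a / 2 * (j : ℝ)⁻¹ = (√(j : ℝ))⁻¹ * (a * (2 * √(j : ℝ))⁻¹) := by
        field_simp; rw [sq_sqrt (by linarith)]
    _ ≤ (√(j : ℝ))⁻¹ * (a * (√(j : ℝ) - √((j : ℝ) - 1))) := by
        gcongr; exact inv_two_mul_sqrt_le_sqrt_sub_sqrt_sub_one hj

theorem mul_harmonic_le_sum_Icc_sq {x : ℕ → ℝ} {a : ℝ} (ha : 0 ≤ a)
    (hS : ∀ k : ℕ, a * √(k : ℝ) ≤ ∑ j ∈ Icc 1 k, x j) (n : ℕ) :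
    a ^ 2 / 4 * (harmonic n : ℝ) ≤ ∑ j ∈ Icc 1 n, x j ^ 2 := by
  rcases Nat.eq_zero_or_pos n with rfl | hn
  · simp
  have hH : (0 : ℝ) < harmonic n := by exact_mod_cast harmonic_pos hn.ne'
  set H : ℝ := (harmonic n : ℝ)
  set T := ∑ j ∈ Icc 1 n, (√(j : ℝ))⁻¹ * x j
  have hT : a / 2 * H ≤ T := mul_harmonic_le_sum_Icc_inv_sqrt_mul ha hS n
  have hCS : T ^ 2 ≤ (∑ j ∈ Icc 1 n, x j ^ 2) * H := by
    have hw : ∑ j ∈ Icc 1 n, (√(j : ℝ))⁻¹ ^ 2 = H := by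
      simp_rw [H, cast_harmonic_eq_sum_Icc_inv, inv_pow, sq_sqrt (Nat.cast_nonneg _)]
    rw [← hw, mul_comm]
    exact sum_mul_sq_le_sq_mul_sq _ _ _
  refine le_of_mul_le_mul_right ?_ hH
  calc a ^ 2 / 4 * H * H = (a / 2 * H) ^ 2 := by ring
    _ ≤ T ^ 2 := pow_le_pow_left₀ (by positivity) hT 2
    _ ≤ _ := hCS

theorem stmt17_general (Y : ℕ → ℝ) (a : ℝ) (ha : 0 < a)
    (hS : ∀ n : ℕ, 1 ≤ n → a * Real.sqrt n ≤ ∑ j ∈ Finset.Icc 1 n, 1 / Y j) :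
    ∀ n : ℕ, 2 ≤ n → a ^ 2 / 4 * Real.log n ≤ ∑ j ∈ Finset.Icc 1 n, 1 / (Y j) ^ 2 := by
  intro n _
  have hS₀ : ∀ k : ℕ, a * √(k : ℝ) ≤ ∑ j ∈ Icc 1 k, 1 / Y j := fun k ↦ by
    rcases Nat.eq_zero_or_pos k with rfl | hk
    · simp
    · exact hS k hk
  calc a ^ 2 / 4 * log n ≤ a ^ 2 / 4 * (harmonic n : ℝ) := by
        gcongr; simpa using log_le_harmonic_floor n n.cast_nonneg
    _ ≤ ∑ j ∈ Icc 1 n, (1 / Y j) ^ 2 := mul_harmonic_le_sum_Icc_sq ha.le hS₀ n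
    _ = ∑ j ∈ Icc 1 n, 1 / Y j ^ 2 := by simp_rw [div_pow, one_pow]

/-- If `Y j` are positive reals with `∑_{j=1}^n 1/(Y j) ≥ a √n` for all `n` (with `a > 0`)
and `Y j ≤ c √j` for a constant `c > 0`, then `∑_{j=1}^n 1/(Y j)^2 ≥ (a^2/4) log n`
for all `n ≥ 2`. -/
theorem stmt17 (Y : ℕ → ℝ) (hY : ∀ j, 1 ≤ j → 0 < Y j) (a c : ℝ) (ha : 0 < a) (hc : 0 < c)
    (hbd : ∀ j : ℕ, 1 ≤ j → Y j ≤ c * Real.sqrt j)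
    (hS : ∀ n : ℕ, 1 ≤ n → a * Real.sqrt n ≤ ∑ j ∈ Finset.Icc 1 n, 1 / Y j) :
    ∀ n : ℕ, 2 ≤ n → a ^ 2 / 4 * Real.log n ≤ ∑ j ∈ Finset.Icc 1 n, 1 / (Y j) ^ 2 :=
  stmt17_general Y a ha hS
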